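/- arXiv:1403.7368 — 3 statements merged into one kernel-verified Lean document; each statement's English description precedes it below -/
import Mathlib

section
/- Let d ≥ 1 and let α ∈ ℕ^d be a multi-index with |α| = α_1 + ... + α_d. Then for all X ≥ 0, ∫_{Ω_d(X)} L_{α_d}(X − t_1 − ... − t_{d−1}) ∏_{j=1}^{d−1} L_{α_j}(t_j) dt_1...dt_{d−1} = Σ_{k=0}^{d−1} C(d−1,k) (−1)^k L_{|α|+k}(X), where Ω_d(X) = { (t_1,...,t_{d−1}) : t_j > 0, t_1 + ... + t_{d−1} < X } (for d = 1 the left-hand side is L_{α_1}(X)). -/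
/-! Writing `I f x = ∫₀ˣ f`, Pascal's rule gives `L_{n+1} = L_n - I L_n`. Integration by parts
moves `I` from one factor of the convolution `(f ⋆ g)(X) = ∫₀ˣ f(x) g(X - x) dx` to the
other, so `L_{m+1} ⋆ L_n = L_m ⋆ L_{n+1}` and hence
`L_m ⋆ L_n = L_0 ⋆ L_{m+n} = L_{m+n} - L_{m+n+1}`.
Integrating out the first coordinate of the simplex turns dimension `d + 1` into dimension `d`
plus one such convolution, and Pascal's rule once more turns the alternating sum weighted by
`C(d, k)` into the one weighted by `C(d + 1, k)`. -/

open MeasureTheory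

noncomputable section

/-- The `n`-th Laguerre polynomial `L_n(x) = Σ_{k=0}^n (n choose k) (−x)^k / k!`. -/
def laguerreFun (n : ℕ) (x : ℝ) : ℝ :=
  ∑ k ∈ Finset.range (n + 1), (n.choose k : ℝ) * (-x) ^ k / (k.factorial : ℝ)

open Finset

theorem sum_range_succ_choose_mul {R : Type*} [NonAssocSemiring R] (n : ℕ) (f : ℕ → R) :
    ∑ i ∈ range (n + 1 + 1), ((n + 1).choose i : R) * f i =
      ∑ i ∈ range (n + 1), (n.choose i : R) * (f i + f (i + 1)) := by
  simpa [mul_add, sum_add_distrib] using sum_choose_succ_mul (fun i _ => f i) n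

@[fun_prop]
theorem continuous_laguerreFun (n : ℕ) : Continuous (laguerreFun n) := by
  unfold laguerreFun; fun_prop

@[simp]
theorem laguerreFun_zero : laguerreFun 0 = 1 := by
  ext; simp [laguerreFun]

theorem integral_laguerreFun (n : ℕ) (x : ℝ) :
    ∫ t in (0 : ℝ)..x, laguerreFun n t = laguerreFun n x - laguerreFun (n + 1) x := by
  have hterm (k : ℕ) : ∫ t in (0 : ℝ)..x, (n.choose k : ℝ) * ((-t) ^ k / k.factorial) =
      -((n.choose k : ℝ) * ((-x) ^ (k + 1) / (k + 1).factorial)) := by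
    rw [intervalIntegral.integral_const_mul, intervalIntegral.integral_div,
      intervalIntegral.integral_comp_neg (fun t => t ^ k), integral_pow]
    push_cast [Nat.factorial_succ]
    field_simp
    ring
  simp only [laguerreFun, mul_div_assoc]
  rw [sum_range_succ_choose_mul, intervalIntegral.integral_finsetSum
    fun k _ => (by fun_prop : Continuous _).intervalIntegrable _ _]
  simp only [hterm, mul_add, sum_add_distrib, sum_neg_distrib]
  ring

theorem integral_primitive_mul_comp_sub {f g : ℝ → ℝ} (hf : Continuous f) (hg : Continuous g)
    (X : ℝ) :
    ∫ x in (0 : ℝ)..X, (∫ t in (0 : ℝ)..x, f t) * g (X - x) =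
      ∫ x in (0 : ℝ)..X, f x * ∫ t in (0 : ℝ)..(X - x), g t := by
  have hG (x : ℝ) : HasDerivAt (fun x => -∫ t in (0 : ℝ)..(X - x), g t) (g (X - x)) x :=
    (((hg.integral_hasStrictDerivAt 0 (X - x)).hasDerivAt.comp x
      ((hasDerivAt_id x).const_sub X)).neg).congr_deriv (by simp)
  have := intervalIntegral.integral_mul_deriv_eq_deriv_mul (a := 0) (b := X)
    (fun x _ => (hf.integral_hasStrictDerivAt 0 x).hasDerivAt) (fun x _ => hG x)
    (hf.intervalIntegrable _ _)
    ((by fun_prop : Continuous fun x => g (X - x)).intervalIntegrable _ _)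
  simpa using this

theorem integral_laguerreFun_mul_laguerreFun_sub (m n : ℕ) (X : ℝ) :
    ∫ x in (0 : ℝ)..X, laguerreFun m x * laguerreFun n (X - x) =
      laguerreFun (m + n) X - laguerreFun (m + n + 1) X := by
  induction m generalizing n with
  | zero =>
    simp [intervalIntegral.integral_comp_sub_left (laguerreFun n), integral_laguerreFun]
  | succ m ih =>
    have hshift : ∫ x in (0 : ℝ)..X, laguerreFun (m + 1) x * laguerreFun n (X - x) =
        ∫ x in (0 : ℝ)..X, laguerreFun m x * laguerreFun (n + 1) (X - x) := by
      have hparts := integral_primitive_mul_comp_sub (continuous_laguerreFun m)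
        (continuous_laguerreFun n) X
      simp only [integral_laguerreFun, sub_mul, mul_sub] at hparts
      rw [intervalIntegral.integral_sub, intervalIntegral.integral_sub] at hparts
      · linarith
      all_goals exact Continuous.intervalIntegrable (by fun_prop) _ _
    rw [hshift, ih, Nat.add_right_comm m 1 n, Nat.add_assoc m n 1]

theorem integral_laguerreFun_mul_alternating_sum (a b d : ℕ) (X : ℝ) :
    ∫ x in (0 : ℝ)..X, laguerreFun a x *
        ∑ k ∈ range (d + 1), (d.choose k : ℝ) * (-1) ^ k * laguerreFun (b + k) (X - x) =
      ∑ k ∈ range (d + 1 + 1),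
        ((d + 1).choose k : ℝ) * (-1) ^ k * laguerreFun (a + b + k) X := by
  simp only [mul_sum, mul_left_comm (laguerreFun a _), mul_assoc]
  rw [intervalIntegral.integral_finsetSum fun k _ =>
    (by fun_prop : Continuous _).intervalIntegrable _ _, sum_range_succ_choose_mul]
  refine sum_congr rfl fun k _ => ?_
  rw [intervalIntegral.integral_const_mul, intervalIntegral.integral_const_mul,
    integral_laguerreFun_mul_laguerreFun_sub, pow_succ]
  simp only [← add_assoc]
  ring

def cornerSimplex (d : ℕ) (X : ℝ) : Set (Fin d → ℝ) :=
  {t | (∀ j, 0 ≤ t j) ∧ ∑ j, t j ≤ X}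

theorem cornerSimplex_zero {X : ℝ} (hX : 0 ≤ X) : cornerSimplex 0 X = Set.univ := by
  ext t; simp [cornerSimplex, hX]

theorem isCompact_cornerSimplex (d : ℕ) (X : ℝ) : IsCompact (cornerSimplex d X) := by
  refine (isCompact_Icc (a := 0) (b := fun _ => X)).of_isClosed_subset ?_ fun t ht =>
    ⟨ht.1, fun j => (single_le_sum (fun i _ => ht.1 i) (mem_univ j)).trans ht.2⟩
  exact (isClosed_le continuous_const continuous_id).inter
    (isClosed_le (continuous_finsetSum _ fun j _ => continuous_apply j) continuous_const)

theorem cons_mem_cornerSimplex_iff {d : ℕ} {X x : ℝ} {y : Fin d → ℝ} :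
    (Fin.cons x y : Fin (d + 1) → ℝ) ∈ cornerSimplex (d + 1) X ↔
      x ∈ Set.Icc 0 X ∧ y ∈ cornerSimplex d (X - x) := by
  simp only [cornerSimplex, Set.mem_ofPred_eq, Fin.forall_fin_succ, Fin.sum_univ_succ,
    Fin.cons_zero, Fin.cons_succ, Set.mem_Icc]
  constructor
  · rintro ⟨⟨hx, hy⟩, hsum⟩
    exact ⟨⟨hx, by linarith [sum_nonneg fun j (_ : j ∈ univ) => hy j]⟩, hy, by linarith⟩
  · rintro ⟨⟨hx, -⟩, hy, hsum⟩
    exact ⟨⟨hx, hy⟩, by linarith⟩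

theorem setIntegral_cornerSimplex_succ {E : Type*} [NormedAddCommGroup E] [NormedSpace ℝ E]
    {d : ℕ} {X : ℝ} (hX : 0 ≤ X) {F : (Fin (d + 1) → ℝ) → E}
    (hF : IntegrableOn F (cornerSimplex (d + 1) X)) :
    ∫ t in cornerSimplex (d + 1) X, F t =
      ∫ x in (0 : ℝ)..X, ∫ y in cornerSimplex d (X - x), F (Fin.cons x y) := by
  have hS : MeasurableSet (cornerSimplex (d + 1) X) :=
    (isCompact_cornerSimplex _ _).isClosed.measurableSet
  have he := (volume_preserving_piFinSuccAbove (fun _ : Fin (d + 1) => ℝ) 0).symm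
  have hslice (x : ℝ) : ∫ y, (cornerSimplex (d + 1) X).indicator F (Fin.cons x y) =
      (Set.Icc 0 X).indicator (fun x => ∫ y in cornerSimplex d (X - x), F (Fin.cons x y)) x := by
    by_cases hx : x ∈ Set.Icc 0 X
    · rw [Set.indicator_of_mem hx,
        ← integral_indicator (isCompact_cornerSimplex d _).isClosed.measurableSet]
      refine integral_congr_ae (.of_forall fun y => ?_)
      by_cases hy : y ∈ cornerSimplex d (X - x)
      · rw [Set.indicator_of_mem hy]
        exact Set.indicator_of_mem (cons_mem_cornerSimplex_iff.2 ⟨hx, hy⟩) F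
      · rw [Set.indicator_of_notMem hy]
        exact Set.indicator_of_notMem (fun h => hy (cons_mem_cornerSimplex_iff.1 h).2) F
    · simp [cons_mem_cornerSimplex_iff, hx]
  rw [← integral_indicator hS, ← he.integral_comp', Measure.volume_eq_prod, integral_prod]
  · simp only [MeasurableEquiv.piFinSuccAbove_symm_apply, Fin.insertNthEquiv, Fin.insertNth_zero',
      Equiv.coe_fn_mk, hslice]
    rw [integral_indicator measurableSet_Icc, integral_Icc_eq_integral_Ioc,
      ← intervalIntegral.integral_of_le hX]
  · rw [← Measure.volume_eq_prod]
    exact (he.integrable_comp_emb (MeasurableEquiv.measurableEmbedding _)).2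
      (hF.integrable_indicator hS)

def laguerreSimplexIntegrand {d : ℕ} (α : Fin (d + 1) → ℕ) (X : ℝ) (t : Fin d → ℝ) :
    ℝ :=
  laguerreFun (α (Fin.last d)) (X - ∑ j, t j) * ∏ j : Fin d, laguerreFun (α j.castSucc) (t j)

theorem continuous_laguerreSimplexIntegrand {d : ℕ} (α : Fin (d + 1) → ℕ) (X : ℝ) :
    Continuous (laguerreSimplexIntegrand α X) := by
  unfold laguerreSimplexIntegrand; fun_prop

theorem laguerreSimplexIntegrand_cons {d : ℕ} (α : Fin (d + 2) → ℕ) (X x : ℝ)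
    (y : Fin d → ℝ) :
    laguerreSimplexIntegrand α X (Fin.cons x y) =
      laguerreFun (α 0) x * laguerreSimplexIntegrand (Fin.tail α) (X - x) y := by
  simp only [laguerreSimplexIntegrand, Fin.sum_univ_succ, Fin.prod_univ_succ, Fin.cons_zero,
    Fin.cons_succ, Fin.tail, Fin.succ_last, ← Fin.succ_castSucc, Fin.castSucc_zero,
    sub_add_eq_sub_sub]
  ring

theorem laguerre_simplex_integral (d : ℕ) (α : Fin (d + 1) → ℕ) (X : ℝ) (hX : 0 ≤ X) :
    (∫ t in {t : Fin d → ℝ | (∀ j, 0 ≤ t j) ∧ (∑ j, t j) ≤ X},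
        laguerreFun (α (Fin.last d)) (X - ∑ j, t j) *
          ∏ j : Fin d, laguerreFun (α j.castSucc) (t j)) =
      ∑ k ∈ Finset.range (d + 1),
        (d.choose k : ℝ) * (-1 : ℝ) ^ k * laguerreFun ((∑ j, α j) + k) X := by
  change ∫ t in cornerSimplex d X, laguerreSimplexIntegrand α X t = _
  induction d generalizing X with
  | zero => simp [cornerSimplex_zero hX, laguerreSimplexIntegrand, volume_pi, measureReal_def]
  | succ d ih =>
    have hslice : ∀ x ∈ Set.uIcc 0 X,
        ∫ y in cornerSimplex d (X - x), laguerreSimplexIntegrand α X (Fin.cons x y) =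
          laguerreFun (α 0) x * ∑ k ∈ range (d + 1),
            (d.choose k : ℝ) * (-1) ^ k * laguerreFun ((∑ j, Fin.tail α j) + k) (X - x) := by
      intro x hx
      rw [Set.uIcc_of_le hX] at hx
      simp only [laguerreSimplexIntegrand_cons, integral_const_mul]
      rw [ih _ _ (sub_nonneg.2 hx.2)]
    rw [setIntegral_cornerSimplex_succ hX
        ((continuous_laguerreSimplexIntegrand α X).continuousOn.integrableOn_compact
          (isCompact_cornerSimplex _ _)),
      intervalIntegral.integral_congr hslice, integral_laguerreFun_mul_alternating_sum,
      Fin.sum_univ_succ α]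
    rfl
end
end

section
/- For every n ≥ 1 and all X ∈ ℝ, the derivative of T_n satisfies T_n'(X) = (1/2) S_{n−1}(X). -/
/-! The difference `L_{n+1} - L_n` has the explicit antiderivative form
`Σ_k C(n,k) (-x)^{k+1}/(k+1)!` (Pascal's rule), so `(L_n - L_{n+1})' = L_n`. Since
`T_{n+1} - T_n = ((-1)^n/2) (L_n - L_{n+1})` and `T_0 = 1/2`, induction gives
`T_n' = (1/2) Σ_{k<n} (-1)^k L_k = (1/2) S_{n-1}`. -/

open MeasureTheory

noncomputable section

/-- `T_n(X) = Σ_{k=0}^{n−1} (−1)^k L_k(X) + ((−1)^n/2) L_n(X)`. -/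
def Tfun (n : ℕ) (X : ℝ) : ℝ :=
  (∑ k ∈ Finset.range n, (-1 : ℝ) ^ k * laguerreFun k X) +
    (-1 : ℝ) ^ n / 2 * laguerreFun n X

/-- `V_α(X) = 4 e^{−X/2} Σ_{k=0}^{d−1} C(d−1,k) T_{|α|+k}(X)`. -/
def Vfun (d : ℕ) (α : Fin d → ℕ) (X : ℝ) : ℝ :=
  4 * Real.exp (-X / 2) *
    ∑ k ∈ Finset.range d, ((d - 1).choose k : ℝ) * Tfun ((∑ j, α j) + k) X

/-- `S_n(X) = Σ_{k=0}^{n} (−1)^k L_k(X)`. -/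
def Sfun (n : ℕ) (X : ℝ) : ℝ :=
  ∑ k ∈ Finset.range (n + 1), (-1 : ℝ) ^ k * laguerreFun k X

open Finset

lemma laguerreFun_zero_s9 : laguerreFun 0 = fun _ => 1 := by
  funext x
  simp [laguerreFun]

lemma laguerreFun_succ_sub (n : ℕ) (x : ℝ) :
    laguerreFun (n + 1) x - laguerreFun n x =
      ∑ k ∈ range (n + 1), (n.choose k : ℝ) * (-x) ^ (k + 1) / ((k + 1).factorial : ℝ) := by
  have extend : laguerreFun n x =
      ∑ k ∈ range (n + 2), (n.choose k : ℝ) * (-x) ^ k / (k.factorial : ℝ) := by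
    rw [laguerreFun, sum_range_succ _ (n + 1), Nat.choose_succ_self, Nat.cast_zero, zero_mul,
      zero_div, add_zero]
  rw [extend, laguerreFun, ← sum_sub_distrib, sum_range_succ']
  simp only [Nat.choose_succ_succ', Nat.cast_add]
  simp [add_mul, add_div]

lemma hasDerivAt_laguerreFun_succ_sub (n : ℕ) (x : ℝ) :
    HasDerivAt (fun y => laguerreFun (n + 1) y - laguerreFun n y) (-laguerreFun n x) x := by
  simp only [laguerreFun_succ_sub]
  have term : ∀ k ∈ range (n + 1), HasDerivAt
      (fun y => (n.choose k : ℝ) * (-y) ^ (k + 1) / ((k + 1).factorial : ℝ))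
      (-((n.choose k : ℝ) * (-x) ^ k / (k.factorial : ℝ))) x := by
    intro k _
    refine ((((hasDerivAt_neg x).pow (k + 1)).const_mul (n.choose k : ℝ)).div_const
      ((k + 1).factorial : ℝ)).congr_deriv ?_
    push_cast [Nat.factorial_succ, Nat.add_sub_cancel]
    field_simp
  simpa [laguerreFun, sum_neg_distrib] using HasDerivAt.fun_sum term

lemma Tfun_zero : Tfun 0 = fun _ => 1 / 2 := by
  funext x
  simp [Tfun, laguerreFun_zero_s9]

lemma Tfun_succ (n : ℕ) :
    Tfun (n + 1) = fun x =>
      Tfun n x - (-1 : ℝ) ^ n / 2 * (laguerreFun (n + 1) x - laguerreFun n x) := by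
  funext x
  rw [Tfun, Tfun, sum_range_succ, pow_succ]
  ring

lemma hasDerivAt_Tfun (n : ℕ) (x : ℝ) :
    HasDerivAt (Tfun n) (1 / 2 * ∑ k ∈ range n, (-1 : ℝ) ^ k * laguerreFun k x) x := by
  induction n with
  | zero =>
    rw [Tfun_zero, sum_range_zero, mul_zero]
    exact hasDerivAt_const x _
  | succ n ih =>
    rw [Tfun_succ, sum_range_succ]
    refine (ih.fun_sub ((hasDerivAt_laguerreFun_succ_sub n x).const_mul
      ((-1 : ℝ) ^ n / 2))).congr_deriv ?_
    ring

theorem deriv_T (n : ℕ) (hn : 1 ≤ n) (X : ℝ) :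
    deriv (Tfun n) X = (1 / 2) * Sfun (n - 1) X := by
  rw [(hasDerivAt_Tfun n X).deriv, Sfun, Nat.sub_add_cancel hn]

end
end

section
/- For every n ∈ ℕ and all X ≥ 0, one has T_n(X) ≥ 1/2. -/
open MeasureTheory

noncomputable section

/-!
With `A_n = Σ_{k ≤ n} (-1)^k L_k` one has `T_0 = 1/2`, `T_{n+1} = (A_n + A_{n+1}) / 2`, and
`L_{n+1}' = L_n' - L_n` gives `A_{n+1}' = A_n - A_n'`; hence `T_{n+1}' = A_n / 2` and
`T_{n+1}(0) = 1/2`, so it suffices that `A_n ≥ 0` on `[0, ∞)`. This follows from the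
sum-of-squares identity, in terms of the probabilists' Hermite polynomials `He_i`,
  `A_n(a²) = Σ_{i+j=n} He_i(a)² He_j(0)² / (i! j!)`,
the coefficient form of `e^{a²t/(1+t)} / (1-t²) = Σ He_i(a)² tⁱ/i! · Σ He_j(0)² tʲ/j!`
(Mehler's formula times `(1-t²)^{-1/2}`). Both sides satisfy `P_{n+1}' = 2a P_n - P_n'` and
equal `(1 + (-1)^n) / 2` at `a = 0`, which determines them.
-/

open Polynomial Finset
open scoped Nat

lemma Polynomial.eq_of_derivative_eq_of_eval_zero_eq {R : Type*} [CommRing R] [IsAddTorsionFree R]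
    {p q : R[X]} (hd : derivative p = derivative q) (h0 : p.eval 0 = q.eval 0) : p = q := by
  have h := eq_C_of_derivative_eq_zero (p := p - q) (by rw [derivative_sub, hd, sub_self])
  rwa [coeff_zero_eq_eval_zero, eval_sub, h0, sub_self, C_0, sub_eq_zero] at h

lemma Polynomial.eval_zero_le_eval_of_derivative_nonneg {p : ℝ[X]}
    (hp : ∀ x, 0 ≤ x → 0 ≤ (derivative p).eval x) {x : ℝ} (hx : 0 ≤ x) :
    p.eval 0 ≤ p.eval x :=
  monotoneOn_of_deriv_nonneg (convex_Ici 0) p.continuous.continuousOn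
    p.differentiable.differentiableOn
    (fun y hy => by rw [Polynomial.deriv]; exact hp y (by simp_all [le_of_lt]))
    Set.self_mem_Ici hx hx

lemma Polynomial.derivative_hermite_succ (n : ℕ) :
    derivative (hermite (n + 1)) = ((n : ℤ[X]) + 1) * hermite n := by
  induction n with
  | zero => simp
  | succ n ih =>
    rw [hermite_succ (n + 1), derivative_sub, derivative_mul, ih, derivative_mul]
    simp only [derivative_X, derivative_add, derivative_natCast, derivative_one, one_mul,
      zero_mul, zero_add, add_zero]
    rw [hermite_succ n]
    push_cast
    ring

def convSq {K : Type*} [Semiring K] (c : ℕ → K) (m : ℕ) : K :=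
  ∑ p ∈ antidiagonal m, c p.1 * c p.2

lemma two_mul_sum_fst_mul_eq_convSq {K : Type*} [CommSemiring K] (c : ℕ → K) (m : ℕ) :
    2 * ∑ p ∈ antidiagonal m, (p.1 : K) * (c p.1 * c p.2) = m * convSq c m := by
  rw [two_mul]
  nth_rewrite 2 [← Nat.sum_antidiagonal_swap]
  rw [← sum_add_distrib, convSq, mul_sum]
  refine sum_congr rfl fun p hp => ?_
  rw [← (mem_antidiagonal.1 hp)]
  simp only [Prod.fst_swap, Prod.snd_swap]
  push_cast
  ring

-- `Σ c_n tⁿ` solves `(1 - t²) f' = t f`, so its square solves `(1 - t²) g' = 2 t g`.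
lemma convSq_add_two {K : Type*} [Field K] [CharZero K] {c : ℕ → K} (h1 : c 1 = 0)
    (hrec : ∀ n : ℕ, (n + 2 : K) * c (n + 2) = (n + 1) * c n) (m : ℕ) :
    convSq c (m + 2) = convSq c m := by
  have shift : ∑ p ∈ antidiagonal (m + 2), (p.1 : K) * (c p.1 * c p.2)
      = ∑ p ∈ antidiagonal m, ((p.1 : K) + 1) * (c p.1 * c p.2) := by
    rw [Nat.sum_antidiagonal_succ, Nat.sum_antidiagonal_succ]
    simp only [Nat.cast_zero, zero_mul, zero_add, Nat.cast_add, Nat.cast_one, h1, mul_zero,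
      zero_mul]
    refine sum_congr rfl fun p _ => ?_
    rw [add_assoc, one_add_one_eq_two, ← mul_assoc, hrec]
    ring
  have hsplit : ∑ p ∈ antidiagonal m, ((p.1 : K) + 1) * (c p.1 * c p.2)
      = ∑ p ∈ antidiagonal m, (p.1 : K) * (c p.1 * c p.2) + convSq c m := by
    rw [convSq, ← sum_add_distrib]
    exact sum_congr rfl fun _ _ => by ring
  have key := two_mul_sum_fst_mul_eq_convSq c (m + 2)
  rw [shift, hsplit] at key
  push_cast at key
  apply mul_left_cancel₀ (show (m : K) + 2 ≠ 0 by exact_mod_cast (m + 1).succ_ne_zero)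
  linear_combination -key + two_mul_sum_fst_mul_eq_convSq c m

lemma convSq_eq {K : Type*} [Field K] [CharZero K] {c : ℕ → K} (h0 : c 0 = 1) (h1 : c 1 = 0)
    (hrec : ∀ n : ℕ, (n + 2 : K) * c (n + 2) = (n + 1) * c n) (m : ℕ) :
    convSq c m = (1 + (-1) ^ m) / 2 := by
  induction m using Nat.twoStepInduction with
  | zero => simp [convSq, h0]
  | one => simp [convSq, Nat.sum_antidiagonal_succ, h0, h1]
  | more m ih _ => rw [convSq_add_two h1 hrec, ih, pow_add]; norm_num

def hermiteReal (n : ℕ) : ℝ[X] := (hermite n).map (Int.castRingHom ℝ)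

lemma hermiteReal_zero : hermiteReal 0 = 1 := by simp [hermiteReal]

lemma hermiteReal_succ (n : ℕ) :
    hermiteReal (n + 1) = X * hermiteReal n - derivative (hermiteReal n) := by
  simp [hermiteReal, hermite_succ, derivative_map]

lemma derivative_hermiteReal_succ (n : ℕ) :
    derivative (hermiteReal (n + 1)) = ((n : ℝ[X]) + 1) * hermiteReal n := by
  rw [hermiteReal, derivative_map, derivative_hermite_succ]
  simp [hermiteReal]

def hermiteWeight (j : ℕ) : ℝ := (hermiteReal j).eval 0 ^ 2 / j !

lemma hermiteWeight_nonneg (j : ℕ) : 0 ≤ hermiteWeight j := by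
  unfold hermiteWeight; positivity

lemma hermiteWeight_zero : hermiteWeight 0 = 1 := by simp [hermiteWeight, hermiteReal_zero]

lemma hermiteWeight_one : hermiteWeight 1 = 0 := by
  simp [hermiteWeight, hermiteReal_succ, hermiteReal_zero]

lemma hermiteWeight_add_two (n : ℕ) :
    (n + 2 : ℝ) * hermiteWeight (n + 2) = (n + 1) * hermiteWeight n := by
  have hval : (hermiteReal (n + 2)).eval 0 = -(n + 1) * (hermiteReal n).eval 0 := by
    rw [hermiteReal_succ, derivative_hermiteReal_succ]
    simp only [eval_sub, eval_mul, eval_X, zero_mul, eval_add, eval_natCast, eval_one, zero_sub]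
    ring
  rw [hermiteWeight, hermiteWeight, hval, Nat.factorial_succ, Nat.factorial_succ]
  push_cast
  field_simp
  ring

lemma convSq_hermiteWeight (m : ℕ) : convSq hermiteWeight m = (1 + (-1) ^ m) / 2 :=
  convSq_eq hermiteWeight_zero hermiteWeight_one hermiteWeight_add_two m

def hermiteSqSum (n : ℕ) : ℝ[X] :=
  ∑ p ∈ antidiagonal n, C (hermiteWeight p.2 / p.1 !) * hermiteReal p.1 ^ 2

lemma eval_hermiteSqSum_nonneg (n : ℕ) (a : ℝ) : 0 ≤ (hermiteSqSum n).eval a := by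
  rw [hermiteSqSum, eval_finsetSum]
  refine sum_nonneg fun p _ => ?_
  have := hermiteWeight_nonneg p.2
  simp only [eval_mul, eval_C, eval_pow]
  positivity

lemma eval_zero_hermiteSqSum (n : ℕ) : (hermiteSqSum n).eval 0 = (1 + (-1) ^ n) / 2 := by
  rw [← convSq_hermiteWeight, hermiteSqSum, eval_finsetSum, convSq]
  refine sum_congr rfl fun p _ => ?_
  simp only [eval_mul, eval_C, eval_pow, hermiteWeight]
  ring

lemma derivative_hermiteSqSum_succ (n : ℕ) :
    derivative (hermiteSqSum (n + 1)) = 2 * X * hermiteSqSum n - derivative (hermiteSqSum n) := by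
  rw [hermiteSqSum, Nat.sum_antidiagonal_succ, hermiteSqSum, mul_sum]
  simp only [derivative_add, derivative_sum, ← sum_sub_distrib, hermiteReal_zero, one_pow,
    mul_one, derivative_C, zero_add]
  refine sum_congr rfl fun p _ => ?_
  have hc : C (hermiteWeight p.2 / (p.1 + 1)!) * ((p.1 : ℝ[X]) + 1)
      = C (hermiteWeight p.2 / p.1 !) := by
    rw [← C_eq_natCast, ← C_1, ← C_add, ← C_mul, Nat.factorial_succ]
    push_cast
    field_simp
  simp only [derivative_C_mul, derivative_pow, derivative_hermiteReal_succ]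
  rw [hermiteReal_succ]
  simp only [Nat.cast_ofNat, map_ofNat, Nat.add_one_sub_one, pow_one]
  linear_combination
    (2 * (X * hermiteReal p.1 - derivative (hermiteReal p.1)) * hermiteReal p.1) * hc

def laguerre (n : ℕ) : ℝ[X] :=
  ∑ k ∈ range (n + 1), C ((-1 : ℝ) ^ k * n.choose k / k !) * X ^ k

lemma eval_laguerre (n : ℕ) (x : ℝ) : (laguerre n).eval x = laguerreFun n x := by
  simp only [laguerre, laguerreFun, eval_finsetSum, eval_mul, eval_C, eval_pow, eval_X]
  exact sum_congr rfl fun k _ => by ring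

lemma coeff_laguerre (n k : ℕ) : (laguerre n).coeff k = (-1 : ℝ) ^ k * n.choose k / k ! := by
  simp only [laguerre, finsetSum_coeff, coeff_C_mul_X_pow, sum_ite_eq, mem_range]
  split_ifs with hk
  · rfl
  · simp [Nat.choose_eq_zero_of_lt (not_lt.1 hk)]

lemma derivative_laguerre_succ (n : ℕ) :
    derivative (laguerre (n + 1)) = derivative (laguerre n) - laguerre n := by
  ext k
  simp only [coeff_derivative, coeff_sub, coeff_laguerre, Nat.choose_succ_succ',
    Nat.factorial_succ]
  push_cast
  field_simp
  ring

lemma laguerre_zero : laguerre 0 = 1 := by simp [laguerre]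

lemma eval_zero_laguerre (n : ℕ) : (laguerre n).eval 0 = 1 := by
  simp [← coeff_zero_eq_eval_zero, coeff_laguerre]

def altLaguerreSum (n : ℕ) : ℝ[X] := ∑ k ∈ range (n + 1), C ((-1) ^ k) * laguerre k

lemma altLaguerreSum_succ (n : ℕ) :
    altLaguerreSum (n + 1) = altLaguerreSum n + C ((-1) ^ (n + 1)) * laguerre (n + 1) :=
  sum_range_succ _ _

lemma derivative_altLaguerreSum_succ (n : ℕ) :
    derivative (altLaguerreSum (n + 1)) = altLaguerreSum n - derivative (altLaguerreSum n) := by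
  induction n with
  | zero =>
    rw [altLaguerreSum_succ, derivative_add, derivative_C_mul, derivative_laguerre_succ]
    simp [altLaguerreSum, laguerre_zero]
  | succ n ih =>
    simp only [altLaguerreSum_succ, derivative_add, derivative_C_mul] at ih ⊢
    simp only [map_pow, map_neg, map_one] at ih ⊢
    linear_combination ih + (-1) ^ (n + 2) * derivative_laguerre_succ (n + 1)

lemma eval_zero_altLaguerreSum (n : ℕ) : (altLaguerreSum n).eval 0 = (1 + (-1) ^ n) / 2 := by
  induction n with
  | zero => simp [altLaguerreSum, laguerre_zero]
  | succ n ih =>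
    rw [altLaguerreSum_succ, eval_add, eval_mul, eval_C, eval_zero_laguerre, ih, pow_succ]
    ring

lemma Tfun_succ_s12 (n : ℕ) (x : ℝ) :
    Tfun (n + 1) x = ((altLaguerreSum n).eval x + (altLaguerreSum (n + 1)).eval x) / 2 := by
  rw [altLaguerreSum_succ]
  simp only [Tfun, altLaguerreSum, eval_add, eval_mul, eval_C, eval_finsetSum, eval_laguerre]
  ring

lemma hermiteSqSum_eq_altLaguerreSum_comp (n : ℕ) :
    hermiteSqSum n = (altLaguerreSum n).comp (X ^ 2) := by
  induction n with
  | zero =>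
    simp [hermiteSqSum, altLaguerreSum, hermiteReal_zero, hermiteWeight_zero, laguerre_zero]
  | succ n ih =>
    refine eq_of_derivative_eq_of_eval_zero_eq ?_ ?_
    · rw [derivative_hermiteSqSum_succ, ih, derivative_comp, derivative_comp,
        derivative_altLaguerreSum_succ, sub_comp]
      simp only [derivative_X_pow, Nat.cast_ofNat, map_ofNat]
      ring
    · simp [eval_zero_hermiteSqSum, eval_zero_altLaguerreSum]

lemma eval_altLaguerreSum_nonneg (n : ℕ) {x : ℝ} (hx : 0 ≤ x) :
    0 ≤ (altLaguerreSum n).eval x := by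
  rw [← Real.sq_sqrt hx, ← eval_X (x := √x), ← eval_pow, ← eval_comp,
    ← hermiteSqSum_eq_altLaguerreSum_comp]
  exact eval_hermiteSqSum_nonneg n _

theorem T_ge_half (n : ℕ) (X : ℝ) (hX : 0 ≤ X) : 1 / 2 ≤ Tfun n X := by
  cases n with
  | zero => simp [Tfun, laguerreFun]
  | succ n =>
    set P := altLaguerreSum n + altLaguerreSum (n + 1)
    have hP' : derivative P = altLaguerreSum n := by
      rw [derivative_add, derivative_altLaguerreSum_succ]
      ring
    have hP0 : P.eval 0 = 1 := by
      simp only [P, eval_add, eval_zero_altLaguerreSum, pow_succ]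
      ring
    have hmono := eval_zero_le_eval_of_derivative_nonneg
      (fun x hx => hP' ▸ eval_altLaguerreSum_nonneg n hx) hX
    rw [Tfun_succ_s12, ← eval_add]
    linarith
end
end
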